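/- Let Z, Z^k : [0, T] → R be càdlàg functions such that sup_{0≤s≤T} (|Z^k(s) - Z(s)| + |Z^k(s-) - Z(s-)|) → 0 as k → ∞. Define θ := inf{s ≥ 0 : min(Z(s), Z(s-)) = 0} ∧ T and θ^k := inf{s ≥ 0 : min(Z^k(s), Z^k(s-)) = 0} ∧ T. If min(Z(s), Z(s-)) > 0 for all s < θ, then liminf_{k→∞} θ^k ≥ θ. -/

import Mathlib

open Filter Topology Set

/-!
For `c < θ` the function `min Z L` is positive on the compact interval `[0, c]`, and because `Z`
is càdlàg with left limits `L` this positivity is uniform: `Z, L ≥ δ > 0` on `[0, c]`. Once the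
uniform distance between `(Zk, Lk)` and `(Z, L)` drops below `δ`, the function `min Zk Lk` cannot
vanish before `c`, so `θk ≥ c`. The uniform bound comes from compactness: a càdlàg function is
locally bounded, hence bounded on `[a, b]`, and applying this to `1 / f` gives the positive lower
bound.
-/

theorem abs_min_sub_min_le_add {α : Type*} [AddCommGroup α] [LinearOrder α]
    [IsOrderedAddMonoid α] (a b c d : α) : |min a b - min c d| ≤ |a - c| + |b - d| :=
  (abs_min_sub_min_le_max a b c d).trans (max_le_add_of_nonneg (abs_nonneg _) (abs_nonneg _))

/-- `g` is the left-limit function `s ↦ f (s-)` of `f` on `[a, b]`, with the convention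
`f (a-) = f a`. -/
structure IsCadlagOn (f g : ℝ → ℝ) (a b : ℝ) : Prop where
  continuousWithinAt_Ici : ∀ s ∈ Ico a b, ContinuousWithinAt f (Ici s) s
  left_eq : g a = f a
  tendsto_nhdsLT : ∀ s ∈ Ioc a b, Tendsto f (𝓝[<] s) (𝓝 (g s))

theorem IsCompact.bddAbove_image_of_isBoundedUnder {X α : Type*} [TopologicalSpace X]
    [SemilatticeSup α] [Nonempty α] {K : Set X} (hK : IsCompact K) {φ : X → α}
    (h : ∀ x ∈ K, IsBoundedUnder (· ≤ ·) (𝓝[K] x) φ) : BddAbove (φ '' K) :=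
  hK.induction_on (p := fun t => BddAbove (φ '' t)) (by simp)
    (fun _ _ hst ht => ht.mono (image_mono hst))
    (fun _ _ hs ht => by rw [image_union]; exact hs.union ht)
    fun x hx => by
      obtain ⟨M, hM⟩ := h x hx
      exact ⟨{u | φ u ≤ M}, hM, M, by rintro _ ⟨u, hu, rfl⟩; exact hu⟩

namespace IsCadlagOn

variable {f g : ℝ → ℝ} {a b x : ℝ}

theorem mono_right (hf : IsCadlagOn f g a b) {c : ℝ} (hcb : c ≤ b) : IsCadlagOn f g a c where
  continuousWithinAt_Ici s hs := hf.continuousWithinAt_Ici s ⟨hs.1, hs.2.trans_le hcb⟩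
  left_eq := hf.left_eq
  tendsto_nhdsLT s hs := hf.tendsto_nhdsLT s ⟨hs.1, hs.2.trans hcb⟩

theorem comp (hf : IsCadlagOn f g a b) {h : ℝ → ℝ} (hh : Continuous h) :
    IsCadlagOn (h ∘ f) (h ∘ g) a b where
  continuousWithinAt_Ici s hs :=
    hh.continuousAt.comp_continuousWithinAt (hf.continuousWithinAt_Ici s hs)
  left_eq := by simp only [Function.comp_apply, hf.left_eq]
  tendsto_nhdsLT s hs := (hh.tendsto _).comp (hf.tendsto_nhdsLT s hs)

theorem inv (hf : IsCadlagOn f g a b) (hpos : ∀ s ∈ Icc a b, 0 < f s ∧ 0 < g s) :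
    IsCadlagOn f⁻¹ g⁻¹ a b where
  continuousWithinAt_Ici s hs :=
    (hf.continuousWithinAt_Ici s hs).inv₀ (hpos s (Ico_subset_Icc_self hs)).1.ne'
  left_eq := by simp only [Pi.inv_apply, hf.left_eq]
  tendsto_nhdsLT s hs := (hf.tendsto_nhdsLT s hs).inv₀ (hpos s (Ioc_subset_Icc_self hs)).2.ne'

theorem tendsto_nhdsWithin_Iio (hf : IsCadlagOn f g a b) (hx : x ∈ Icc a b) :
    Tendsto f (𝓝[Icc a b ∩ Iio x] x) (𝓝 (g x)) := by
  rcases hx.1.eq_or_lt with rfl | hax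
  · have hempty : Icc a b ∩ Iio a = ∅ :=
      eq_empty_of_forall_notMem fun u hu => hu.2.not_ge hu.1.1
    simp [hempty]
  · exact (hf.tendsto_nhdsLT x ⟨hax, hx.2⟩).mono_left (nhdsWithin_mono _ inter_subset_right)

theorem continuousWithinAt_Ici_inter (hf : IsCadlagOn f g a b) (hx : x ∈ Icc a b) :
    ContinuousWithinAt f (Icc a b ∩ Ici x) x := by
  rcases hx.2.eq_or_lt with rfl | hxb
  · exact continuousWithinAt_singleton.mono fun u hu => le_antisymm hu.1.2 hu.2
  · exact (hf.continuousWithinAt_Ici x ⟨hx.1, hxb⟩).mono inter_subset_right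

theorem isBoundedUnder_le (hf : IsCadlagOn f g a b) (hx : x ∈ Icc a b) :
    IsBoundedUnder (· ≤ ·) (𝓝[Icc a b] x) f := by
  have hsplit : 𝓝[Icc a b] x = 𝓝[Icc a b ∩ Iio x] x ⊔ 𝓝[Icc a b ∩ Ici x] x := by
    rw [← nhdsWithin_union, ← inter_union_distrib_left, Iio_union_Ici, inter_univ]
  rw [hsplit, IsBoundedUnder, map_sup]
  exact isBounded_sup (hf.tendsto_nhdsWithin_Iio hx).isBoundedUnder_le
    (hf.continuousWithinAt_Ici_inter hx).tendsto.isBoundedUnder_le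

theorem left_mem_closure (hf : IsCadlagOn f g a b) (hx : x ∈ Icc a b) :
    g x ∈ closure (f '' Icc a b) := by
  rcases hx.1.eq_or_lt with rfl | hax
  · rw [hf.left_eq]
    exact subset_closure (mem_image_of_mem f hx)
  · refine mem_closure_of_tendsto (hf.tendsto_nhdsLT x ⟨hax, hx.2⟩) ?_
    filter_upwards [Ioo_mem_nhdsLT hax] with u hu
    exact mem_image_of_mem f ⟨hu.1.le, hu.2.le.trans hx.2⟩

theorem exists_forall_le (hf : IsCadlagOn f g a b) :
    ∃ M, ∀ s ∈ Icc a b, f s ≤ M ∧ g s ≤ M := by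
  obtain ⟨M, hM⟩ :=
    isCompact_Icc.bddAbove_image_of_isBoundedUnder fun x hx => hf.isBoundedUnder_le hx
  have hclosure : closure (f '' Icc a b) ⊆ Iic M := closure_minimal hM isClosed_Iic
  exact ⟨M, fun s hs => ⟨hM (mem_image_of_mem f hs), hclosure (hf.left_mem_closure hs)⟩⟩

theorem exists_forall_abs_le (hf : IsCadlagOn f g a b) :
    ∃ M, ∀ s ∈ Icc a b, |f s| ≤ M ∧ |g s| ≤ M :=
  (hf.comp continuous_abs).exists_forall_le

theorem exists_pos_forall_le (hf : IsCadlagOn f g a b)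
    (hpos : ∀ s ∈ Icc a b, 0 < f s ∧ 0 < g s) :
    ∃ δ > 0, ∀ s ∈ Icc a b, δ ≤ f s ∧ δ ≤ g s := by
  obtain ⟨M, hM⟩ := (hf.inv hpos).exists_forall_le
  have hM' : 0 < max M 1 := lt_max_of_lt_right one_pos
  refine ⟨(max M 1)⁻¹, inv_pos.2 hM', fun s hs => ?_⟩
  exact ⟨inv_le_of_inv_le₀ (hpos s hs).1 ((hM s hs).1.trans (le_max_left _ _)),
    inv_le_of_inv_le₀ (hpos s hs).2 ((hM s hs).2.trans (le_max_left _ _))⟩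

theorem bddAbove_range_abs_sub_add {f' g' : ℝ → ℝ}
    (hf : IsCadlagOn f g a b) (hf' : IsCadlagOn f' g' a b) :
    BddAbove (range fun s : Icc a b => |f' s - f s| + |g' s - g s|) := by
  obtain ⟨M, hM⟩ := hf.exists_forall_abs_le
  obtain ⟨M', hM'⟩ := hf'.exists_forall_abs_le
  refine ⟨2 * (M + M'), ?_⟩
  rintro _ ⟨s, rfl⟩
  obtain ⟨hfs, hgs⟩ := hM s s.2
  obtain ⟨hf's, hg's⟩ := hM' s s.2
  linarith [abs_sub (f' s) (f s), abs_sub (g' s) (g s)]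

end IsCadlagOn

noncomputable def firstZeroTime (φ : ℝ → ℝ) (a b : ℝ) : ℝ :=
  sInf ({s ∈ Icc a b | φ s = 0} ∪ {b})

theorem firstZeroTime_le (φ : ℝ → ℝ) (a b : ℝ) : firstZeroTime φ a b ≤ b :=
  csInf_le
    ((bddBelow_Icc.union bddBelow_singleton).mono (union_subset_union_left _ (sep_subset _ _)))
    (mem_union_right _ rfl)

theorem le_firstZeroTime {φ : ℝ → ℝ} {a b c : ℝ} (hcb : c ≤ b)
    (h : ∀ s ∈ Icc a b, s < c → φ s ≠ 0) : c ≤ firstZeroTime φ a b :=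
  le_csInf ⟨b, mem_union_right _ rfl⟩ <| by
    rintro s (⟨hs, hφs⟩ | rfl)
    · exact not_lt.1 fun hsc => h s hs hsc hφs
    · exact hcb

theorem liminf_hitting_times_ge_general
    (T : ℝ)
    (Z L : ℝ → ℝ) (Zk Lk : ℕ → ℝ → ℝ)
    (hrightZ : ∀ s ∈ Set.Ico (0 : ℝ) T, ContinuousWithinAt Z (Set.Ici s) s)
    (hL0 : L 0 = Z 0)
    (hleftZ : ∀ s ∈ Set.Ioc (0 : ℝ) T, Tendsto Z (nhdsWithin s (Set.Iio s)) (nhds (L s)))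
    (hrightZk : ∀ k, ∀ s ∈ Set.Ico (0 : ℝ) T, ContinuousWithinAt (Zk k) (Set.Ici s) s)
    (hLk0 : ∀ k, Lk k 0 = Zk k 0)
    (hleftZk : ∀ k, ∀ s ∈ Set.Ioc (0 : ℝ) T,
      Tendsto (Zk k) (nhdsWithin s (Set.Iio s)) (nhds (Lk k s)))
    (hunif : Tendsto
      (fun k => ⨆ s : Set.Icc (0 : ℝ) T,
        (|Zk k s - Z s| + |Lk k s - L s|)) atTop (nhds 0))
    (θ : ℝ) (θk : ℕ → ℝ)
    (hθ : θ = sInf ({s ∈ Set.Icc (0 : ℝ) T | min (Z s) (L s) = 0} ∪ {T}))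
    (hθk : ∀ k, θk k = sInf ({s ∈ Set.Icc (0 : ℝ) T | min (Zk k s) (Lk k s) = 0} ∪ {T}))
    (hpos : ∀ s : ℝ, 0 ≤ s → s < θ → 0 < min (Z s) (L s)) :
    θ ≤ atTop.liminf θk := by
  have hZ : IsCadlagOn Z L 0 T := ⟨hrightZ, hL0, hleftZ⟩
  have hZk (k : ℕ) : IsCadlagOn (Zk k) (Lk k) 0 T := ⟨hrightZk k, hLk0 k, hleftZk k⟩
  have hθT : θ ≤ T := hθ ▸ firstZeroTime_le _ 0 T
  have hθkT (k : ℕ) : θk k ≤ T := (hθk k).trans_le (firstZeroTime_le _ 0 T)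
  refine le_of_forall_lt_imp_le_of_dense fun c hc => ?_
  obtain ⟨δ, hδ, hδle⟩ := (hZ.mono_right (hc.le.trans hθT)).exists_pos_forall_le
    fun s hs => lt_min_iff.1 (hpos s hs.1 (hs.2.trans_lt hc))
  refine le_liminf_of_le (isCoboundedUnder_ge_of_le atTop hθkT) ?_
  filter_upwards [hunif.eventually_lt_const hδ] with k hk
  rw [hθk k]
  refine le_firstZeroTime (hc.le.trans hθT) fun s hs hsc => ne_of_gt ?_
  -- `⨆` of an unbounded family of reals is `0`, so `hunif` only controls the distance once the
  -- family is known to be bounded.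
  have hdist : |Zk k s - Z s| + |Lk k s - L s| < δ :=
    (le_ciSup (hZ.bddAbove_range_abs_sub_add (hZk k)) ⟨s, hs⟩).trans_lt hk
  have hmin := abs_min_sub_min_le_add (Zk k s) (Lk k s) (Z s) (L s)
  have hδmin := le_min (hδle s ⟨hs.1, hsc.le⟩).1 (hδle s ⟨hs.1, hsc.le⟩).2
  linarith [neg_abs_le (min (Zk k s) (Lk k s) - min (Z s) (L s))]

/-- Stability of first hitting times under uniform perturbations. Let `Z, Zk k` be càdlàg
functions on `[0,T]` with left-limit functions `L, Lk k` (with `L 0 = Z 0`, etc.) such that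
`sup_{0≤s≤T} (|Zk k s - Z s| + |Lk k s - L s|) → 0`. Define
`θ := inf{s ∈ [0,T] : min (Z s) (L s) = 0} ∧ T` and similarly `θk`. If
`min (Z s) (L s) > 0` for all `s < θ` (with `s ≥ 0`), then `liminf θk ≥ θ`. -/
theorem liminf_hitting_times_ge
    (T : ℝ) (hT : 0 < T)
    (Z L : ℝ → ℝ) (Zk Lk : ℕ → ℝ → ℝ)
    (hrightZ : ∀ s ∈ Set.Ico (0 : ℝ) T, ContinuousWithinAt Z (Set.Ici s) s)
    (hL0 : L 0 = Z 0)
    (hleftZ : ∀ s ∈ Set.Ioc (0 : ℝ) T, Tendsto Z (nhdsWithin s (Set.Iio s)) (nhds (L s)))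
    (hrightZk : ∀ k, ∀ s ∈ Set.Ico (0 : ℝ) T, ContinuousWithinAt (Zk k) (Set.Ici s) s)
    (hLk0 : ∀ k, Lk k 0 = Zk k 0)
    (hleftZk : ∀ k, ∀ s ∈ Set.Ioc (0 : ℝ) T,
      Tendsto (Zk k) (nhdsWithin s (Set.Iio s)) (nhds (Lk k s)))
    (hunif : Tendsto
      (fun k => ⨆ s : Set.Icc (0 : ℝ) T,
        (|Zk k s - Z s| + |Lk k s - L s|)) atTop (nhds 0))
    (θ : ℝ) (θk : ℕ → ℝ)
    (hθ : θ = sInf ({s ∈ Set.Icc (0 : ℝ) T | min (Z s) (L s) = 0} ∪ {T}))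
    (hθk : ∀ k, θk k = sInf ({s ∈ Set.Icc (0 : ℝ) T | min (Zk k s) (Lk k s) = 0} ∪ {T}))
    (hpos : ∀ s : ℝ, 0 ≤ s → s < θ → 0 < min (Z s) (L s)) :
    θ ≤ atTop.liminf θk :=
  liminf_hitting_times_ge_general T Z L Zk Lk hrightZ hL0 hleftZ hrightZk hLk0 hleftZk hunif θ θk hθ
    hθk hpos
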